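/- arXiv:1405.7087 — 3 statements merged into one kernel-verified Lean document; each statement's English description precedes it below -/
import Mathlib

section
/- For every function ρ : ℕ → ℝ_{≥0} with ρ(j) → ∞ as j → ∞, there exists a function ρ' : ℝ_{≥0} → ℝ_{≥0} such that: ρ' is strictly increasing; ρ'(x+y) ≤ ρ'(x) + ρ'(y) for all x, y ≥ 0; ρ'(x) ≤ x/2 for all x ≥ 0; whenever ρ'(x) is a natural number, x is a natural number; ρ'(x) → ∞ as x → ∞; and ⌊ρ'(j)⌋ ≤ ⌊ρ(j)⌋ for every j ∈ ℕ. -/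
open Filter

/-!
Take `ρ'` to be the lower envelope `x ↦ inf_k (a k + x / 2^(k+1))` of lines with natural
intercepts `a k → ∞`, `a 0 = 0`, and slopes `2^-(k+1)`. Since `a k → ∞` the infimum is
attained, which makes the envelope strictly increasing; subadditivity comes from evaluating
`x + y` on the flatter of the two lines attaining the envelope at `x` and at `y`. If the
envelope at `x` is a natural number `m`, then on an attaining line `x = (m - a k) * 2^(k+1)`.
Finally the line of index `j` has value `< a j + 1` at `j`, so `a j = ⌊ρ j⌋₊ - ⌊ρ 0⌋₊` gives
the floor bound.
-/

noncomputable def dyadicEnvelope (a : ℕ → ℕ) (x : NNReal) : NNReal :=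
  ⨅ k, ((a k : NNReal) + x / 2 ^ (k + 1))

namespace dyadicEnvelope

variable {a : ℕ → ℕ}

theorem le_line (x : NNReal) (k : ℕ) : dyadicEnvelope a x ≤ a k + x / 2 ^ (k + 1) :=
  ciInf_le (OrderBot.bddBelow _) k

theorem exists_eq_line (ha : Tendsto a atTop atTop) (x : NNReal) :
    ∃ k, dyadicEnvelope a x = a k + x / 2 ^ (k + 1) := by
  have hline : Tendsto (fun k => (a k : NNReal) + x / 2 ^ (k + 1)) cofinite atTop := by
    rw [Nat.cofinite_eq_atTop]
    exact tendsto_atTop_mono (fun k => le_self_add)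
      (tendsto_natCast_atTop_atTop.comp ha)
  obtain ⟨k, hk⟩ := hline.exists_forall_le
  exact ⟨k, (le_line x k).antisymm (le_ciInf hk)⟩

theorem strictMono (ha : Tendsto a atTop atTop) : StrictMono (dyadicEnvelope a) := by
  intro x y hxy
  obtain ⟨k, hk⟩ := exists_eq_line ha y
  calc dyadicEnvelope a x ≤ a k + x / 2 ^ (k + 1) := le_line x k
    _ < a k + y / 2 ^ (k + 1) := by gcongr
    _ = dyadicEnvelope a y := hk.symm

theorem add_le_lines_of_le (x y : NNReal) {j l : ℕ} (hjl : j ≤ l) :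
    dyadicEnvelope a (x + y) ≤ (a j + x / 2 ^ (j + 1)) + (a l + y / 2 ^ (l + 1)) :=
  calc dyadicEnvelope a (x + y) ≤ a l + (x + y) / 2 ^ (l + 1) := le_line _ l
    _ = x / 2 ^ (l + 1) + (a l + y / 2 ^ (l + 1)) := by rw [add_div]; ring
    _ ≤ x / 2 ^ (j + 1) + (a l + y / 2 ^ (l + 1)) := by gcongr; exact one_le_two
    _ ≤ (a j + x / 2 ^ (j + 1)) + (a l + y / 2 ^ (l + 1)) := by gcongr; exact le_add_self

theorem add_le (ha : Tendsto a atTop atTop) (x y : NNReal) :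
    dyadicEnvelope a (x + y) ≤ dyadicEnvelope a x + dyadicEnvelope a y := by
  obtain ⟨j, hj⟩ := exists_eq_line ha x
  obtain ⟨l, hl⟩ := exists_eq_line ha y
  rw [hj, hl]
  rcases le_total j l with hjl | hlj
  · exact add_le_lines_of_le x y hjl
  · rw [add_comm x, add_comm (_ + _)]
    exact add_le_lines_of_le y x hlj

theorem le_half (h0 : a 0 = 0) (x : NNReal) : dyadicEnvelope a x ≤ x / 2 := by
  simpa [h0] using le_line (a := a) x 0

theorem exists_natCast_eq_of_eq_natCast (ha : Tendsto a atTop atTop) {x : NNReal} {m : ℕ}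
    (hm : dyadicEnvelope a x = m) : ∃ n : ℕ, x = n := by
  obtain ⟨k, hk⟩ := exists_eq_line ha x
  rw [hk] at hm
  have hx : x / 2 ^ (k + 1) = ((m - a k : ℕ) : NNReal) := by
    rw [Nat.cast_tsub, ← hm, add_tsub_cancel_left]
  rw [div_eq_iff (by positivity)] at hx
  exact ⟨(m - a k) * 2 ^ (k + 1), by rw [hx]; norm_cast⟩

theorem tendsto_atTop (ha : Tendsto a atTop atTop) : Tendsto (dyadicEnvelope a) atTop atTop := by
  rw [tendsto_atTop_atTop]
  intro M
  obtain ⟨N, hN⟩ := eventually_atTop.1 (ha.eventually_ge_atTop ⌈M⌉₊)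
  refine ⟨M * 2 ^ N, fun x hx => le_ciInf fun k => ?_⟩
  rcases lt_or_ge k N with hkN | hNk
  · have hM : M * 2 ^ (k + 1) ≤ x := le_trans (by gcongr; exacts [one_le_two, hkN]) hx
    exact ((le_div_iff₀ (by positivity)).2 hM).trans le_add_self
  · exact (Nat.le_ceil M).trans ((Nat.cast_le.2 (hN k hNk)).trans le_self_add)

theorem floor_natCast_le (j : ℕ) : ⌊dyadicEnvelope a j⌋₊ ≤ a j := by
  have hj : (j : NNReal) / 2 ^ (j + 1) < 1 := by
    rw [div_lt_one (by positivity)]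
    exact_mod_cast j.lt_two_pow_self.trans (Nat.pow_lt_pow_succ one_lt_two)
  have hlt : dyadicEnvelope a j < (a j + 1 : ℕ) :=
    (le_line _ j).trans_lt (by push_cast; gcongr)
  exact Nat.lt_succ_iff.1 ((Nat.floor_lt zero_le).2 hlt)

end dyadicEnvelope

/-- For every `ρ : ℕ → ℝ_{≥0}` with `ρ(j) → ∞`, there is `ρ' : ℝ_{≥0} → ℝ_{≥0}`
which is strictly increasing, subadditive, satisfies `ρ'(x) ≤ x/2`, whose preimage of `ℕ` is
contained in `ℕ`, which tends to infinity, and with `⌊ρ'(j)⌋ ≤ ⌊ρ(j)⌋` for every `j ∈ ℕ`. -/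
theorem statement12 (ρ : ℕ → NNReal) (hρ : Tendsto ρ atTop atTop) :
    ∃ ρ' : NNReal → NNReal,
      StrictMono ρ' ∧
      (∀ x y : NNReal, ρ' (x + y) ≤ ρ' x + ρ' y) ∧
      (∀ x : NNReal, ρ' x ≤ x / 2) ∧
      (∀ x : NNReal, (∃ m : ℕ, ρ' x = m) → ∃ m : ℕ, x = m) ∧
      Tendsto ρ' atTop atTop ∧
      (∀ j : ℕ, ⌊ρ' (j : NNReal)⌋₊ ≤ ⌊ρ j⌋₊) := by
  set a : ℕ → ℕ := fun k => ⌊ρ k⌋₊ - ⌊ρ 0⌋₊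
  have ha : Tendsto a atTop atTop :=
    (tendsto_sub_atTop_nat _).comp (tendsto_nat_floor_atTop.comp hρ)
  refine ⟨dyadicEnvelope a, dyadicEnvelope.strictMono ha, dyadicEnvelope.add_le ha,
    dyadicEnvelope.le_half (Nat.sub_self _), fun x ⟨m, hm⟩ =>
    dyadicEnvelope.exists_natCast_eq_of_eq_natCast ha hm, dyadicEnvelope.tendsto_atTop ha,
    fun j => (dyadicEnvelope.floor_natCast_le j).trans (Nat.sub_le _ _)⟩
end

section
/- Let M be a commutative monoid and let g : ι → M be a family indexed by a finite type ι such that the submonoid generated by the range of g is all of M. Let m = ∏_{i ∈ ι} g(i). Then every element of the localization of M at the submonoid of powers of m is invertible; that is, this localization is a group. -/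
/-! The image of `m = ∏ i, g i` is a unit of the localization, hence so is the image of each
divisor `g i` of `m`, hence so is the image of every element of the monoid they generate.
Every fraction `a / s` is then the product of two units. -/

theorem isUnit_map_of_closure_eq_top {M N F : Type*} [Monoid M] [Monoid N] [FunLike F M N]
    [MonoidHomClass F M N] (f : F) {s : Set M} (hs : Submonoid.closure s = ⊤)
    (h : ∀ a ∈ s, IsUnit (f a)) (a : M) : IsUnit (f a) :=
  have hle : Submonoid.closure s ≤ (IsUnit.submonoid N).comap f := Submonoid.closure_le.2 h
  hle (hs ▸ Submonoid.mem_top a)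

namespace Submonoid.LocalizationMap

variable {M N : Type*} [CommMonoid M] [CommMonoid N] {S : Submonoid M}

theorem isUnit_of_dvd (f : S.LocalizationMap N) {a s : M} (hs : s ∈ S) (h : a ∣ s) :
    IsUnit (f a) :=
  isUnit_of_dvd_unit (map_dvd f h) (f.map_units ⟨s, hs⟩)

theorem isUnit_of_forall_isUnit (f : S.LocalizationMap N) (h : ∀ a, IsUnit (f a)) (z : N) :
    IsUnit z :=
  let ⟨⟨a, _⟩, hz⟩ := f.surj z
  isUnit_of_mul_isUnit_left (hz ▸ h a)

end Submonoid.LocalizationMap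

/-- Let `M` be a commutative monoid generated by the range of a family
`g : ι → M` indexed by a finite type, and let `m = ∏ i, g i`. Then every element of the
localization of `M` at the submonoid of powers of `m` is invertible; that is, this
localization is a group. -/
theorem statement13 (M : Type) [CommMonoid M] (ι : Type) [Fintype ι] (g : ι → M)
    (hgen : Submonoid.closure (Set.range g) = ⊤)
    (x : Localization (Submonoid.powers (∏ i : ι, g i))) :
    IsUnit x := by
  let f := Localization.monoidOf (Submonoid.powers (∏ i : ι, g i))
  refine f.isUnit_of_forall_isUnit (isUnit_map_of_closure_eq_top f hgen ?_) x
  rintro _ ⟨i, rfl⟩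
  exact f.isUnit_of_dvd (Submonoid.mem_powers _) (Finset.dvd_prod_of_mem g (Finset.mem_univ i))
end

section
/- For every k ∈ ℕ and every homotopy equivalence h : X → Y of topological spaces, the induced map Sym_k(h) : Sym_k(X) → Sym_k(Y), which applies h to each point of a multiset, is a homotopy equivalence. -/
noncomputable section

/-- The setoid on `Fin k → α` identifying tuples up to permutation. -/
def permSetoid (α : Type) (k : ℕ) : Setoid (Fin k → α) where
  r f g := ∃ σ : Equiv.Perm (Fin k), f ∘ σ = g
  iseqv := by
    refine ⟨fun f => ⟨Equiv.refl _, rfl⟩, ?_, ?_⟩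
    · rintro f g ⟨σ, rfl⟩
      exact ⟨σ.symm, by ext i; simp⟩
    · rintro f g h ⟨σ, rfl⟩ ⟨τ, rfl⟩
      exact ⟨τ.trans σ, rfl⟩

/-- The `k`-th symmetric power of a topological space: the quotient of `X^k` by the
permutation action of the symmetric group `S_k`, with the quotient topology. -/
def SymPow (α : Type) [TopologicalSpace α] (k : ℕ) : Type :=
  Quotient (permSetoid α k)

instance (α : Type) [TopologicalSpace α] (k : ℕ) : TopologicalSpace (SymPow α k) :=
  inferInstanceAs (TopologicalSpace (Quotient (permSetoid α k)))

/-- The point of `SymPow α k` determined by a `k`-tuple. -/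
def SymPow.mk {α : Type} [TopologicalSpace α] {k : ℕ} (f : Fin k → α) : SymPow α k :=
  Quotient.mk (permSetoid α k) f

/-- The continuous map `Sym_k(h) : Sym_k(X) → Sym_k(Y)` induced by a continuous map
`h : X → Y`, applying `h` to each point of a multiset. -/
def SymPow.map {α β : Type} [TopologicalSpace α] [TopologicalSpace β] {k : ℕ}
    (h : C(α, β)) : C(SymPow α k, SymPow β k) where
  toFun := Quotient.lift (fun f => SymPow.mk (⇑h ∘ f)) (by
    rintro f g ⟨σ, rfl⟩
    exact Quotient.sound ⟨σ, rfl⟩)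
  continuous_toFun := by
    apply continuous_quot_lift
    exact continuous_quot_mk.comp
      (continuous_pi fun i => h.continuous.comp (continuous_apply i))

/-! A homotopy `F` between `f` and `g` descends to `Sym_k` as `(t, x) ↦ Sym_k(F t) x`. Its continuity
on `I × Sym_k(α)` holds because `I` is locally compact, so `id × (quotient map)` is again a quotient
map. Functoriality of `Sym_k` then carries a homotopy inverse of `h` to one of `Sym_k(h)`. -/

namespace SymPow

open Topology

variable {α β γ : Type} [TopologicalSpace α] [TopologicalSpace β] [TopologicalSpace γ] {k : ℕ}

theorem isQuotientMap_mk : IsQuotientMap (SymPow.mk : (Fin k → α) → SymPow α k) :=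
  isQuotientMap_quot_mk

theorem map_id : map (k := k) (ContinuousMap.id α) = ContinuousMap.id _ := by
  ext x
  induction x using Quotient.ind
  rfl

theorem map_comp (f : C(α, β)) (g : C(β, γ)) :
    map (k := k) (g.comp f) = (map g).comp (map f) := by
  ext x
  induction x using Quotient.ind
  rfl

def mapHomotopy {f g : C(α, β)} (F : f.Homotopy g) : (map (k := k) f).Homotopy (map g) where
  toFun p := map (F.curry p.1) p.2
  continuous_toFun := isQuotientMap_mk.continuous_lift_prod_right <|
    continuous_quot_mk.comp <| continuous_pi fun i =>
      F.continuous.comp (continuous_fst.prodMk ((continuous_apply i).comp continuous_snd))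
  map_zero_left x := by simp
  map_one_left x := by simp

end SymPow

theorem ContinuousMap.Homotopic.symPowMap {α β : Type} [TopologicalSpace α] [TopologicalSpace β]
    {k : ℕ} {f g : C(α, β)} (hfg : f.Homotopic g) :
    (SymPow.map (k := k) f).Homotopic (SymPow.map g) :=
  hfg.map SymPow.mapHomotopy

def ContinuousMap.HomotopyEquiv.symPowCongr {α β : Type} [TopologicalSpace α]
    [TopologicalSpace β] {k : ℕ} (e : ContinuousMap.HomotopyEquiv α β) :
    ContinuousMap.HomotopyEquiv (SymPow α k) (SymPow β k) where
  toFun := SymPow.map e.toFun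
  invFun := SymPow.map e.invFun
  left_inv := by simpa only [← SymPow.map_comp, SymPow.map_id] using e.left_inv.symPowMap
  right_inv := by simpa only [← SymPow.map_comp, SymPow.map_id] using e.right_inv.symPowMap

/-- for every `k ∈ ℕ` and every homotopy equivalence `h : X → Y` of topological
spaces, the induced map `Sym_k(h) : Sym_k(X) → Sym_k(Y)` is a homotopy equivalence. -/
theorem statement15 (k : ℕ) (X Y : Type) [TopologicalSpace X] [TopologicalSpace Y]
    (h : ContinuousMap.HomotopyEquiv X Y) :
    ∃ e : ContinuousMap.HomotopyEquiv (SymPow X k) (SymPow Y k),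
      e.toFun = SymPow.map h.toFun :=
  ⟨h.symPowCongr, rfl⟩
end
end
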